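/- arXiv:1503.07895 — 6 statements merged into one kernel-verified Lean document; each statement's English description precedes it below -/
import Mathlib

section
/- Let a₁,a₂,a₃ > 0, Δ = √(a₁a₂a₃), and for u = (u₁,u₂,u₃) ∈ ℝ³ let T(u) = Δ·[[0, −u₃/a₁, u₂/a₁], [u₃/a₂, 0, −u₁/a₂], [−u₂/a₃, u₁/a₃, 0]]. Then T(u)³ = −B(u,u)·T(u), where B(u,u) = a₁u₁² + a₂u₂² + a₃u₃². In particular, if B(u,u) = 1 then T(u)³ = −T(u). -/
open Matrix Real

set_option maxHeartbeats 1000000 in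
theorem elliptical_skew_cube (a₁ a₂ a₃ : ℝ) (ha₁ : 0 < a₁) (ha₂ : 0 < a₂) (ha₃ : 0 < a₃)
    (u₁ u₂ u₃ : ℝ) (Δ : ℝ) (hΔ : Δ = Real.sqrt (a₁ * a₂ * a₃))
    (T : Matrix (Fin 3) (Fin 3) ℝ)
    (hT : T = Δ • !![0, -u₃ / a₁, u₂ / a₁; u₃ / a₂, 0, -u₁ / a₂; -u₂ / a₃, u₁ / a₃, 0]) :
    T ^ 3 = -((a₁ * u₁ ^ 2 + a₂ * u₂ ^ 2 + a₃ * u₃ ^ 2) • T) ∧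
    (a₁ * u₁ ^ 2 + a₂ * u₂ ^ 2 + a₃ * u₃ ^ 2 = 1 → T ^ 3 = -T) := by
  have hΔ2 : Δ ^ 2 = a₁ * a₂ * a₃ := by
    rw [hΔ, sq_sqrt]; positivity
  have key : T ^ 3 = -((a₁ * u₁ ^ 2 + a₂ * u₂ ^ 2 + a₃ * u₃ ^ 2) • T) := by
    subst hT
    rw [smul_pow, pow_succ !![0, -u₃ / a₁, u₂ / a₁; u₃ / a₂, 0, -u₁ / a₂; -u₂ / a₃, u₁ / a₃, 0] 2,
        sq, Matrix.mul_fin_three, Matrix.mul_fin_three]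
    ext i j
    fin_cases i <;> fin_cases j <;>
      simp [Matrix.smul_apply, smul_eq_mul] <;>
      field_simp <;>
      first
        | (right; ring)
        | (rw [show Δ ^ 3 = Δ * (a₁ * a₂ * a₃) by rw [← hΔ2]; ring]; ring)
  exact ⟨key, fun h => by rw [key, h, one_smul]⟩
end

section
/- Let a₁,a₂,a₃ > 0, Δ = √(a₁a₂a₃), and let u = (u₁,u₂,u₃) ∈ ℝ³ satisfy a₁u₁² + a₂u₂² + a₃u₃² = 1 (a B-unit vector). Let T = Δ·[[0, −u₃/a₁, u₂/a₁], [u₃/a₂, 0, −u₁/a₂], [−u₂/a₃, u₁/a₃, 0]]. Then for every θ ∈ ℝ the matrix exponential satisfies exp(θ·T) = I + (sin θ)·T + (1 − cos θ)·T² (the Rodrigues formula). -/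
open Matrix Real

set_option maxHeartbeats 1000000

lemma rodrigues_pow_odd (T : Matrix (Fin 3) (Fin 3) ℝ) (h : T ^ 3 = -T) (n : ℕ) :
    T ^ (2 * n + 1) = ((-1 : ℝ) ^ n) • T := by
  induction n with
  | zero => simp
  | succ n ih =>
    have h2 : 2 * (n + 1) + 1 = (2 * n + 1) + 2 := by ring
    have h3 : T * T ^ 2 = T ^ 3 := (pow_succ' T 2).symm
    rw [h2, pow_add, ih, smul_mul_assoc, h3, h, smul_neg, pow_succ, mul_neg_one, neg_smul]

lemma rodrigues_pow_even (T : Matrix (Fin 3) (Fin 3) ℝ) (h : T ^ 3 = -T) (n : ℕ) :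
    T ^ (2 * n + 2) = ((-1 : ℝ) ^ n) • T ^ 2 := by
  induction n with
  | zero => simp
  | succ n ih =>
    have h2 : 2 * (n + 1) + 2 = (2 * n + 1) + 3 := by ring
    rw [h2, pow_add, rodrigues_pow_odd T h, h, smul_mul_assoc, mul_neg, smul_neg,
      ← pow_two, pow_succ (-1 : ℝ) n, mul_neg_one, neg_smul]

lemma rodrigues_exp (T : Matrix (Fin 3) (Fin 3) ℝ) (h : T ^ 3 = -T) (θ : ℝ) :
    NormedSpace.exp (θ • T) = 1 + Real.sin θ • T + (1 - Real.cos θ) • T ^ 2 := by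
  letI : SeminormedRing (Matrix (Fin 3) (Fin 3) ℝ) := Matrix.linftyOpSemiNormedRing
  letI : NormedRing (Matrix (Fin 3) (Fin 3) ℝ) := Matrix.linftyOpNormedRing
  letI : NormedAlgebra ℝ (Matrix (Fin 3) (Fin 3) ℝ) := Matrix.linftyOpNormedAlgebra
  rw [NormedSpace.exp_eq_tsum (𝕂 := ℝ)]
  refine HasSum.tsum_eq ?_
  have hodd : HasSum (fun n : ℕ => (((2 * n + 1).factorial : ℝ))⁻¹ • (θ • T) ^ (2 * n + 1))
      (Real.sin θ • T) := by
    have h1 := (Real.hasSum_sin θ).smul_const T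
    convert h1 using 2 with n
    rw [smul_pow, rodrigues_pow_odd T h, smul_smul, smul_smul]
    congr 1
    ring
  have hcos : HasSum
      (fun n : ℕ => ((-1 : ℝ) ^ n * θ ^ (2 * (n + 1)) / ((2 * (n + 1)).factorial : ℝ)))
      (1 - Real.cos θ) := by
    have h1 : HasSum
        (fun n : ℕ => ((-1 : ℝ) ^ (n + 1) * θ ^ (2 * (n + 1)) / ((2 * (n + 1)).factorial : ℝ)))
        (Real.cos θ - 1) := by
      refine (hasSum_nat_add_iff
        (f := fun n : ℕ => ((-1 : ℝ) ^ n * θ ^ (2 * n) / ((2 * n).factorial : ℝ))) 1).mpr ?_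
      simpa using Real.hasSum_cos θ
    have heq : (fun n : ℕ => ((-1 : ℝ) ^ n * θ ^ (2 * (n + 1)) / ((2 * (n + 1)).factorial : ℝ)))
        = fun n : ℕ =>
          -((-1 : ℝ) ^ (n + 1) * θ ^ (2 * (n + 1)) / ((2 * (n + 1)).factorial : ℝ)) := by
      funext n; ring
    rw [heq, show (1 - Real.cos θ) = -(Real.cos θ - 1) by ring]
    exact h1.neg
  have heven : HasSum (fun n : ℕ => (((2 * n).factorial : ℝ))⁻¹ • (θ • T) ^ (2 * n))
      (1 + (1 - Real.cos θ) • T ^ 2) := by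
    have h1 := hcos.smul_const (T ^ 2)
    have h2 : HasSum (fun n : ℕ => (((2 * (n + 1)).factorial : ℝ))⁻¹ • (θ • T) ^ (2 * (n + 1)))
        ((1 - Real.cos θ) • T ^ 2) := by
      convert h1 using 2 with n
      have h3 : 2 * (n + 1) = 2 * n + 2 := by ring
      rw [smul_pow, h3, rodrigues_pow_even T h, smul_smul, smul_smul]
      congr 1
      ring
    have h4 := (hasSum_nat_add_iff
      (f := fun n : ℕ => (((2 * n).factorial : ℝ))⁻¹ • (θ • T) ^ (2 * n)) 1).mp h2
    convert h4 using 1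
    · rfl
    · rw [Finset.sum_range_one, mul_zero, pow_zero, Nat.factorial_zero, Nat.cast_one, inv_one, one_smul, add_comm]
  have hfin : HasSum (fun n : ℕ => ((n.factorial : ℝ))⁻¹ • (θ • T) ^ n)
      ((1 + (1 - Real.cos θ) • T ^ 2) + Real.sin θ • T) :=
    HasSum.even_add_odd heven hodd
  rw [show (1 : Matrix (Fin 3) (Fin 3) ℝ) + Real.sin θ • T + (1 - Real.cos θ) • T ^ 2
      = (1 + (1 - Real.cos θ) • T ^ 2) + Real.sin θ • T from by abel]
  exact hfin

theorem elliptical_rodrigues_3d (a₁ a₂ a₃ : ℝ) (ha₁ : 0 < a₁) (ha₂ : 0 < a₂) (ha₃ : 0 < a₃)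
    (u₁ u₂ u₃ : ℝ) (hu : a₁ * u₁ ^ 2 + a₂ * u₂ ^ 2 + a₃ * u₃ ^ 2 = 1)
    (Δ : ℝ) (hΔ : Δ = Real.sqrt (a₁ * a₂ * a₃))
    (T : Matrix (Fin 3) (Fin 3) ℝ)
    (hT : T = Δ • !![0, -u₃ / a₁, u₂ / a₁; u₃ / a₂, 0, -u₁ / a₂; -u₂ / a₃, u₁ / a₃, 0])
    (θ : ℝ) :
    NormedSpace.exp (θ • T) = 1 + Real.sin θ • T + (1 - Real.cos θ) • T ^ 2 := by
  have ha : (0 : ℝ) ≤ a₁ * a₂ * a₃ := by positivity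
  have hΔ2 : Δ ^ 2 = a₁ * a₂ * a₃ := by rw [hΔ]; exact Real.sq_sqrt ha
  have h1 : a₁ ≠ 0 := ha₁.ne'
  have h2 : a₂ ≠ 0 := ha₂.ne'
  have h3 : a₃ ≠ 0 := ha₃.ne'
  have hcube : T ^ 3 = -T := by
    subst hT
    ext i j
    fin_cases i <;> fin_cases j <;>
      simp [pow_succ, Matrix.mul_apply, Fin.sum_univ_three]
    all_goals (field_simp; ring_nf)
    all_goals first
      | (linear_combination ((Δ^3*(u₃*a₁^3*a₂*a₃)))*hu + ((Δ*(u₃*a₁^3*a₂*a₃)))*hΔ2)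
      | (linear_combination (-(Δ^3*(u₃*a₁^3*a₂*a₃)))*hu + (-(Δ*(u₃*a₁^3*a₂*a₃)))*hΔ2)
      | (linear_combination ((Δ^3*(u₂*a₁^3*a₂*a₃)))*hu + ((Δ*(u₂*a₁^3*a₂*a₃)))*hΔ2)
      | (linear_combination (-(Δ^3*(u₂*a₁^3*a₂*a₃)))*hu + (-(Δ*(u₂*a₁^3*a₂*a₃)))*hΔ2)
      | (linear_combination ((Δ^3*(u₃*a₂^3*a₁*a₃)))*hu + ((Δ*(u₃*a₂^3*a₁*a₃)))*hΔ2)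
      | (linear_combination (-(Δ^3*(u₃*a₂^3*a₁*a₃)))*hu + (-(Δ*(u₃*a₂^3*a₁*a₃)))*hΔ2)
      | (linear_combination ((Δ^3*(u₁*a₂^3*a₁*a₃)))*hu + ((Δ*(u₁*a₂^3*a₁*a₃)))*hΔ2)
      | (linear_combination (-(Δ^3*(u₁*a₂^3*a₁*a₃)))*hu + (-(Δ*(u₁*a₂^3*a₁*a₃)))*hΔ2)
      | (linear_combination ((Δ^3*(u₂*a₃^3*a₁*a₂)))*hu + ((Δ*(u₂*a₃^3*a₁*a₂)))*hΔ2)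
      | (linear_combination (-(Δ^3*(u₂*a₃^3*a₁*a₂)))*hu + (-(Δ*(u₂*a₃^3*a₁*a₂)))*hΔ2)
      | (linear_combination ((Δ^3*(u₁*a₃^3*a₁*a₂)))*hu + ((Δ*(u₁*a₃^3*a₁*a₂)))*hΔ2)
      | (linear_combination (-(Δ^3*(u₁*a₃^3*a₁*a₂)))*hu + (-(Δ*(u₁*a₃^3*a₁*a₂)))*hΔ2)
      | (linear_combination (Δ^3*(u₃))*hu + (Δ*(u₃))*hΔ2)
      | (linear_combination (Δ^3*(-u₂))*hu + (Δ*(-u₂))*hΔ2)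
      | (linear_combination (Δ^3*(-u₃))*hu + (Δ*(-u₃))*hΔ2)
      | (linear_combination (Δ^3*(u₁))*hu + (Δ*(u₁))*hΔ2)
      | (linear_combination (Δ^3*(u₂))*hu + (Δ*(u₂))*hΔ2)
      | (linear_combination (Δ^3*(-u₁))*hu + (Δ*(-u₁))*hΔ2)
  exact rodrigues_exp T hcube θ
end

section
/- Let a₁,a₂,a₃ > 0, Δ = √(a₁a₂a₃), and let u = (u₁,u₂,u₃) ∈ ℝ³ satisfy a₁u₁² + a₂u₂² + a₃u₃² = 1. Let T = Δ·[[0, −u₃/a₁, u₂/a₁], [u₃/a₂, 0, −u₁/a₂], [−u₂/a₃, u₁/a₃, 0]] and R = I + (sin θ)·T + (1 − cos θ)·T². Then the characteristic polynomial of R is (X − 1)·(X² − 2(cos θ)·X + 1); equivalently, the complex eigenvalues of R are e^{iθ}, e^{−iθ}, and 1. -/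
open Matrix Real Polynomial

private lemma charpoly_fin_three' (M : Matrix (Fin 3) (Fin 3) ℝ) :
    M.charpoly = X ^ 3 - C (M 0 0 + M 1 1 + M 2 2) * X ^ 2
      + C (M 0 0 * M 1 1 - M 0 1 * M 1 0 + M 0 0 * M 2 2 - M 0 2 * M 2 0
            + M 1 1 * M 2 2 - M 1 2 * M 2 1) * X
      - C (M.det) := by
  rw [Matrix.charpoly, Matrix.det_fin_three, Matrix.det_fin_three]
  simp only [charmatrix_apply_eq, charmatrix_apply_ne _ _ _ (by decide : (0:Fin 3) ≠ 1),
    charmatrix_apply_ne _ _ _ (by decide : (0:Fin 3) ≠ 2),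
    charmatrix_apply_ne _ _ _ (by decide : (1:Fin 3) ≠ 0),
    charmatrix_apply_ne _ _ _ (by decide : (1:Fin 3) ≠ 2),
    charmatrix_apply_ne _ _ _ (by decide : (2:Fin 3) ≠ 0),
    charmatrix_apply_ne _ _ _ (by decide : (2:Fin 3) ≠ 1),
    map_add, _root_.map_mul, map_sub]
  ring

set_option maxHeartbeats 1000000 in
private lemma Tsq_lemma (a₁ a₂ a₃ : ℝ)
    (ha₁ : 0 < a₁) (ha₂ : 0 < a₂) (ha₃ : 0 < a₃)
    (u₁ u₂ u₃ : ℝ) (hu : a₁ * u₁ ^ 2 + a₂ * u₂ ^ 2 + a₃ * u₃ ^ 2 = 1)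
    (Δ : ℝ) (hΔ2 : Δ ^ 2 = a₁ * a₂ * a₃)
    (T : Matrix (Fin 3) (Fin 3) ℝ)
    (hT : T = Δ • !![0, -u₃ / a₁, u₂ / a₁; u₃ / a₂, 0, -u₁ / a₂; -u₂ / a₃, u₁ / a₃, 0]) :
    T ^ 2 = !![a₁*u₁^2-1, a₂*u₁*u₂, a₃*u₁*u₃;
               a₁*u₁*u₂, a₂*u₂^2-1, a₃*u₂*u₃;
               a₁*u₁*u₃, a₂*u₂*u₃, a₃*u₃^2-1] := by
  have h1 := ha₁.ne'
  have h2 := ha₂.ne'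
  have h3 := ha₃.ne'
  have hT' : T = !![0, Δ * (-u₃ / a₁), Δ * (u₂ / a₁);
                    Δ * (u₃ / a₂), 0, Δ * (-u₁ / a₂);
                    Δ * (-u₂ / a₃), Δ * (u₁ / a₃), 0] := by
    rw [hT]; ext i j; fin_cases i <;> fin_cases j <;> simp
  rw [pow_two, hT', Matrix.mul_fin_three]
  ext i j
  fin_cases i <;> fin_cases j <;>
    simp only [Fin.reduceFinMk, Matrix.cons_val, Matrix.cons_val', Matrix.cons_val_zero, Matrix.cons_val_one,
      Matrix.head_cons, Matrix.head_fin_const, Matrix.empty_val',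
      Matrix.cons_val_fin_one, Matrix.of_apply] <;>
    field_simp <;> ring_nf <;>
    first
      | linear_combination (u₁*u₂) * hΔ2
      | linear_combination (u₁*u₃) * hΔ2
      | linear_combination (u₂*u₃) * hΔ2
      | linear_combination ((-1)*a₃*u₃^2 + (-1)*a₂*u₂^2) * hΔ2 + ((-1)*a₁*a₂*a₃) * hu
      | linear_combination ((-1)*a₃*u₃^2 + (-1)*a₁*u₁^2) * hΔ2 + ((-1)*a₁*a₂*a₃) * hu
      | linear_combination ((-1)*a₂*u₂^2 + (-1)*a₁*u₁^2) * hΔ2 + ((-1)*a₁*a₂*a₃) * hu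

set_option maxHeartbeats 2000000 in
theorem elliptical_rodrigues_charpoly (a₁ a₂ a₃ : ℝ)
    (ha₁ : 0 < a₁) (ha₂ : 0 < a₂) (ha₃ : 0 < a₃)
    (u₁ u₂ u₃ : ℝ) (hu : a₁ * u₁ ^ 2 + a₂ * u₂ ^ 2 + a₃ * u₃ ^ 2 = 1)
    (Δ : ℝ) (hΔ : Δ = Real.sqrt (a₁ * a₂ * a₃))
    (T : Matrix (Fin 3) (Fin 3) ℝ)
    (hT : T = Δ • !![0, -u₃ / a₁, u₂ / a₁; u₃ / a₂, 0, -u₁ / a₂; -u₂ / a₃, u₁ / a₃, 0])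
    (θ : ℝ) (R : Matrix (Fin 3) (Fin 3) ℝ)
    (hR : R = 1 + Real.sin θ • T + (1 - Real.cos θ) • T ^ 2) :
    R.charpoly = (X - 1) * (X ^ 2 - Polynomial.C (2 * Real.cos θ) * X + 1) := by
  have h1 := ha₁.ne'
  have h2 := ha₂.ne'
  have h3 := ha₃.ne'
  have hΔ2 : Δ ^ 2 = a₁ * a₂ * a₃ := by
    rw [hΔ, Real.sq_sqrt (by positivity)]
  have hs : Real.sin θ ^ 2 = 1 - Real.cos θ ^ 2 := by
    have := Real.sin_sq_add_cos_sq θ; linarith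
  have hT2 := Tsq_lemma a₁ a₂ a₃ ha₁ ha₂ ha₃ u₁ u₂ u₃ hu Δ hΔ2 T hT
  have hRex : R = !![1 + (1 - Real.cos θ) * (a₁*u₁^2-1),
                   Real.sin θ * (Δ * (-u₃ / a₁)) + (1 - Real.cos θ) * (a₂*u₁*u₂),
                   Real.sin θ * (Δ * (u₂ / a₁)) + (1 - Real.cos θ) * (a₃*u₁*u₃);
                   Real.sin θ * (Δ * (u₃ / a₂)) + (1 - Real.cos θ) * (a₁*u₁*u₂),
                   1 + (1 - Real.cos θ) * (a₂*u₂^2-1),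
                   Real.sin θ * (Δ * (-u₁ / a₂)) + (1 - Real.cos θ) * (a₃*u₂*u₃);
                   Real.sin θ * (Δ * (-u₂ / a₃)) + (1 - Real.cos θ) * (a₁*u₁*u₃),
                   Real.sin θ * (Δ * (u₁ / a₃)) + (1 - Real.cos θ) * (a₂*u₂*u₃),
                   1 + (1 - Real.cos θ) * (a₃*u₃^2-1)] := by
    rw [hR, hT2, hT]
    ext i j
    fin_cases i <;> fin_cases j <;>
      simp [Matrix.one_apply]
  have h_tr : R 0 0 + R 1 1 + R 2 2 = 1 + 2 * Real.cos θ := by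
    simp only [hRex, Matrix.cons_val', Matrix.cons_val_zero, Matrix.cons_val_one,
      Matrix.cons_val_two, Matrix.tail_cons,
      Matrix.head_cons, Matrix.head_fin_const, Matrix.empty_val',
      Matrix.cons_val_fin_one, Matrix.of_apply]
    linear_combination (1 - Real.cos θ) * hu
  have h_m : R 0 0 * R 1 1 - R 0 1 * R 1 0 + R 0 0 * R 2 2 - R 0 2 * R 2 0
      + R 1 1 * R 2 2 - R 1 2 * R 2 1 = 1 + 2 * Real.cos θ := by
    simp only [hRex, Matrix.cons_val', Matrix.cons_val_zero, Matrix.cons_val_one,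
      Matrix.cons_val_two, Matrix.tail_cons,
      Matrix.head_cons, Matrix.head_fin_const, Matrix.empty_val',
      Matrix.cons_val_fin_one, Matrix.of_apply]
    field_simp
    ring_nf
    linear_combination ((Real.sin θ)^2*(a₁*u₁^2+a₂*u₂^2+a₃*u₃^2)) * hΔ2 + (a₁*a₂*a₃*(a₁*u₁^2+a₂*u₂^2+a₃*u₃^2)) * hs + (a₁*a₂*a₃*(1 + 2*(Real.cos θ) - 3*(Real.cos θ)^2)) * hu
  have h_det : R.det = 1 := by
    rw [hRex, Matrix.det_fin_three]
    simp only [Matrix.cons_val', Matrix.cons_val_zero, Matrix.cons_val_one,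
      Matrix.cons_val_two, Matrix.tail_cons,
      Matrix.head_cons, Matrix.head_fin_const, Matrix.empty_val',
      Matrix.cons_val_fin_one, Matrix.of_apply]
    field_simp
    ring_nf
    linear_combination (1*1*a₃*u₃^2*(Real.sin θ)^2*(Real.cos θ) + 1*1*a₃^2*u₃^4*(Real.sin θ)^2 + (-1)*1*1*a₃^2*u₃^4*(Real.sin θ)^2*(Real.cos θ) + 1*a₂*1*u₂^2*(Real.sin θ)^2*(Real.cos θ) + (2)*1*a₂*a₃*u₂^2*u₃^2*(Real.sin θ)^2 + (-2)*1*a₂*a₃*u₂^2*u₃^2*(Real.sin θ)^2*(Real.cos θ) + 1*a₂^2*1*u₂^4*(Real.sin θ)^2 + (-1)*1*a₂^2*1*u₂^4*(Real.sin θ)^2*(Real.cos θ) + a₁*1*1*u₁^2*(Real.sin θ)^2*(Real.cos θ) + (2)*a₁*1*a₃*u₁^2*u₃^2*(Real.sin θ)^2 + (-2)*a₁*1*a₃*u₁^2*u₃^2*(Real.sin θ)^2*(Real.cos θ) + (2)*a₁*a₂*1*u₁^2*u₂^2*(Real.sin θ)^2 + (-2)*a₁*a₂*1*u₁^2*u₂^2*(Real.sin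 θ)^2*(Real.cos θ) + a₁^2*1*1*u₁^4*(Real.sin θ)^2 + (-1)*a₁^2*1*1*u₁^4*(Real.sin θ)^2*(Real.cos θ)) * hΔ2 + (a₁*a₂*a₃^2*u₃^2*(Real.cos θ) + a₁*a₂*a₃^3*u₃^4 + (-1)*a₁*a₂*a₃^3*u₃^4*(Real.cos θ) + a₁*a₂^2*a₃*u₂^2*(Real.cos θ) + (2)*a₁*a₂^2*a₃^2*u₂^2*u₃^2 + (-2)*a₁*a₂^2*a₃^2*u₂^2*u₃^2*(Real.cos θ) + a₁*a₂^3*a₃*u₂^4 + (-1)*a₁*a₂^3*a₃*u₂^4*(Real.cos θ) + a₁^2*a₂*a₃*u₁^2*(Real.cos θ) + (2)*a₁^2*a₂*a₃^2*u₁^2*u₃^2 + (-2)*a₁^2*a₂*a₃^2*u₁^2*u₃^2*(Real.cos θ) + (2)*a₁^2*a₂^2*a₃*u₁^2*u₂^2 + (-2)*a₁^2*a₂^2*a₃*u₁^2*u₂^2*(Real.cos θ) + a₁^3*a₂*a₃*u₁^4 + (-1)*a₁^3*a₂*a₃*u₁^4*(Real.cos θ)) * hs + (a₁*a₂*a₃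 + (-1)*a₁*a₂*a₃*(Real.cos θ)^3 + a₁*a₂*a₃^2*u₃^2 + (-1)*a₁*a₂*a₃^2*u₃^2*(Real.cos θ) + (-1)*a₁*a₂*a₃^2*u₃^2*(Real.cos θ)^2 + a₁*a₂*a₃^2*u₃^2*(Real.cos θ)^3 + a₁*a₂^2*a₃*u₂^2 + (-1)*a₁*a₂^2*a₃*u₂^2*(Real.cos θ) + (-1)*a₁*a₂^2*a₃*u₂^2*(Real.cos θ)^2 + a₁*a₂^2*a₃*u₂^2*(Real.cos θ)^3 + a₁^2*a₂*a₃*u₁^2 + (-1)*a₁^2*a₂*a₃*u₁^2*(Real.cos θ) + (-1)*a₁^2*a₂*a₃*u₁^2*(Real.cos θ)^2 + a₁^2*a₂*a₃*u₁^2*(Real.cos θ)^3) * hu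
  rw [charpoly_fin_three' R, h_tr, h_m, h_det]
  simp only [map_add, _root_.map_one, _root_.map_mul, map_ofNat]
  ring
end

section
/- Let a₁,a₂,a₃ > 0, Δ = √(a₁a₂a₃), Ω = diag(a₁,a₂,a₃), and for u ∈ ℝ³ let T = Δ·[[0, −u₃/a₁, u₂/a₁], [u₃/a₂, 0, −u₁/a₂], [−u₂/a₃, u₁/a₃, 0]]. Then the Cayley transform R = (I + T)·(I − T)⁻¹ satisfies RᵀΩR = Ω and det R = 1; i.e., R is an elliptical rotation matrix for the ellipsoid a₁x² + a₂y² + a₃z² = 1. -/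
open Matrix Real

theorem elliptical_cayley_is_rotation (a₁ a₂ a₃ : ℝ)
    (ha₁ : 0 < a₁) (ha₂ : 0 < a₂) (ha₃ : 0 < a₃)
    (u₁ u₂ u₃ : ℝ)
    (Δ : ℝ) (hΔ : Δ = Real.sqrt (a₁ * a₂ * a₃))
    (Ω T : Matrix (Fin 3) (Fin 3) ℝ)
    (hΩ : Ω = Matrix.diagonal ![a₁, a₂, a₃])
    (hT : T = Δ • !![0, -u₃ / a₁, u₂ / a₁; u₃ / a₂, 0, -u₁ / a₂; -u₂ / a₃, u₁ / a₃, 0])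
    (R : Matrix (Fin 3) (Fin 3) ℝ)
    (hR : R = (1 + T) * (1 - T)⁻¹) :
    Rᵀ * Ω * R = Ω ∧ R.det = 1 := by
  have hΔ2 : Δ ^ 2 = a₁ * a₂ * a₃ := by
    rw [hΔ]; exact Real.sq_sqrt (by positivity)
  -- key skew-adjointness relation
  have hTΩ : Tᵀ * Ω = -(Ω * T) := by
    subst hΩ hT
    ext i j
    fin_cases i <;> fin_cases j <;>
      simp [Matrix.mul_apply, Fin.sum_univ_three, Matrix.diagonal, Matrix.transpose_apply,
        Matrix.vecHead, Matrix.vecTail] <;>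
      field_simp
  -- determinants of 1 - T and 1 + T
  have hdetM : (1 - T).det = 1 + a₁ * u₁ ^ 2 + a₂ * u₂ ^ 2 + a₃ * u₃ ^ 2 := by
    subst hT
    simp [Matrix.det_fin_three, Matrix.one_apply]
    field_simp
    linear_combination (a₁ * u₁ ^ 2 + a₂ * u₂ ^ 2 + a₃ * u₃ ^ 2) * hΔ2
  have hdetN : (1 + T).det = 1 + a₁ * u₁ ^ 2 + a₂ * u₂ ^ 2 + a₃ * u₃ ^ 2 := by
    subst hT
    simp [Matrix.det_fin_three, Matrix.one_apply]
    field_simp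
    linear_combination (a₁ * u₁ ^ 2 + a₂ * u₂ ^ 2 + a₃ * u₃ ^ 2) * hΔ2
  have hpos : (0 : ℝ) < 1 + a₁ * u₁ ^ 2 + a₂ * u₂ ^ 2 + a₃ * u₃ ^ 2 := by positivity
  have hMunit : IsUnit (1 - T).det := by
    rw [hdetM]; exact isUnit_iff_ne_zero.mpr hpos.ne'
  have hMTunit : IsUnit ((1 - T)ᵀ).det := by rwa [Matrix.det_transpose]
  have hMM : (1 - T) * (1 - T)⁻¹ = 1 := Matrix.mul_nonsing_inv _ hMunit
  have hMTM : ((1 - T)ᵀ)⁻¹ * (1 - T)ᵀ = 1 := Matrix.nonsing_inv_mul _ hMTunit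
  -- commutation of (1+T) and (1-T)
  have hcomm : (1 - T) * (1 + T) = (1 + T) * (1 - T) := by noncomm_ring
  -- transpose identities
  have hNΩ : (1 + T)ᵀ * Ω = Ω * (1 - T) := by
    rw [Matrix.transpose_add, Matrix.transpose_one, add_mul, one_mul, hTΩ, mul_sub, mul_one,
      ← sub_eq_add_neg]
  have hMΩ : (1 - T)ᵀ * Ω = Ω * (1 + T) := by
    rw [Matrix.transpose_sub, Matrix.transpose_one, sub_mul, one_mul, hTΩ, sub_neg_eq_add,
      mul_add, mul_one]
  constructor
  · have hRT : Rᵀ = ((1 - T)ᵀ)⁻¹ * (1 + T)ᵀ := by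
      rw [hR, Matrix.transpose_mul, Matrix.transpose_nonsing_inv]
    calc Rᵀ * Ω * R
        = ((1 - T)ᵀ)⁻¹ * (((1 + T)ᵀ * Ω) * ((1 + T) * (1 - T)⁻¹)) := by
          rw [hRT, hR]; simp only [Matrix.mul_assoc]
      _ = ((1 - T)ᵀ)⁻¹ * (Ω * (((1 - T) * (1 + T)) * (1 - T)⁻¹)) := by
          rw [hNΩ]; simp only [Matrix.mul_assoc]
      _ = ((1 - T)ᵀ)⁻¹ * (Ω * ((1 + T) * ((1 - T) * (1 - T)⁻¹))) := by
          rw [hcomm]; simp only [Matrix.mul_assoc]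
      _ = ((1 - T)ᵀ)⁻¹ * ((1 - T)ᵀ * Ω) := by rw [hMM, mul_one, hMΩ]
      _ = Ω := by rw [← Matrix.mul_assoc, hMTM, one_mul]
  · rw [hR, Matrix.det_mul, Matrix.det_nonsing_inv, hdetN, hdetM]
    rw [Ring.inverse_eq_inv]; exact mul_inv_cancel₀ hpos.ne'
end

section
/- Let a₁,a₂,a₃ > 0, Δ = √(a₁a₂a₃), u ∈ ℝ³ with n = B(u,u) = a₁u₁² + a₂u₂² + a₃u₃², and T = Δ·[[0, −u₃/a₁, u₂/a₁], [u₃/a₂, 0, −u₁/a₂], [−u₂/a₃, u₁/a₃, 0]]. Then the characteristic polynomial of the Cayley transform R = (I + T)·(I − T)⁻¹ is (X − 1)·(X² − 2·((1 − n)/(1 + n))·X + 1); equivalently, the complex eigenvalues of R are 1 and ((1 − n) ± 2√n·i)/(1 + n). -/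
open Matrix Real Polynomial
set_option maxHeartbeats 2000000

lemma charpoly3 (A : Matrix (Fin 3) (Fin 3) ℝ) :
    A.charpoly = X^3 - C A.trace * X^2 + C (A 0 0 * A 1 1 - A 0 1 * A 1 0 + (A 0 0 * A 2 2 - A 0 2 * A 2 0) + (A 1 1 * A 2 2 - A 1 2 * A 2 1)) * X - C A.det := by
  rw [Matrix.charpoly, Matrix.det_fin_three, Matrix.trace_fin_three, Matrix.det_fin_three]
  simp [charmatrix_apply_eq, charmatrix_apply_ne, _root_.map_add, _root_.map_mul, _root_.map_sub]
  ring

theorem elliptical_cayley_charpoly (a₁ a₂ a₃ : ℝ)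
    (ha₁ : 0 < a₁) (ha₂ : 0 < a₂) (ha₃ : 0 < a₃)
    (u₁ u₂ u₃ : ℝ) (n : ℝ) (hn : n = a₁ * u₁ ^ 2 + a₂ * u₂ ^ 2 + a₃ * u₃ ^ 2)
    (Δ : ℝ) (hΔ : Δ = Real.sqrt (a₁ * a₂ * a₃))
    (T : Matrix (Fin 3) (Fin 3) ℝ)
    (hT : T = Δ • !![0, -u₃ / a₁, u₂ / a₁; u₃ / a₂, 0, -u₁ / a₂; -u₂ / a₃, u₁ / a₃, 0])
    (R : Matrix (Fin 3) (Fin 3) ℝ)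
    (hR : R = (1 + T) * (1 - T)⁻¹) :
    R.charpoly = (X - 1) * (X ^ 2 - Polynomial.C (2 * ((1 - n) / (1 + n))) * X + 1) := by
  have hprod : 0 < a₁ * a₂ * a₃ := by positivity
  have hΔ2 : Δ ^ 2 = a₁ * a₂ * a₃ := by rw [hΔ]; exact Real.sq_sqrt hprod.le
  have hΔpos : 0 < Δ := by rw [hΔ]; positivity
  have ha3 : a₃ = Δ ^ 2 / (a₁ * a₂) := by rw [hΔ2]; field_simp
  have hn0 : 0 ≤ n := by rw [hn]; positivity
  have h1n : (0:ℝ) < 1 + n := by linarith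
  have hA : (1:Matrix (Fin 3) (Fin 3) ℝ) - T
      = !![1, Δ*(u₃/a₁), -(Δ*(u₂/a₁)); -(Δ*(u₃/a₂)), 1, Δ*(u₁/a₂); Δ*(u₂/a₃), -(Δ*(u₁/a₃)), 1] := by
    subst hT; ext i j
    fin_cases i <;> fin_cases j <;> simp [Matrix.one_apply] <;> ring
  have hAp : (1:Matrix (Fin 3) (Fin 3) ℝ) + T
      = !![1, -(Δ*(u₃/a₁)), Δ*(u₂/a₁); Δ*(u₃/a₂), 1, -(Δ*(u₁/a₂)); -(Δ*(u₂/a₃)), Δ*(u₁/a₃), 1] := by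
    subst hT; ext i j
    fin_cases i <;> fin_cases j <;> simp [Matrix.one_apply] <;> ring
  have hdm : (1 - T).det = 1 + n := by
    rw [hA, Matrix.det_fin_three, hn]
    simp
    rw [ha3]; field_simp; ring
  have hdp : (1 + T).det = 1 + n := by
    rw [hAp, Matrix.det_fin_three, hn]
    simp
    rw [ha3]; field_simp; ring
  have hRs : R = (1 + n)⁻¹ • ((1 + T) * (1 - T).adjugate) := by
    rw [hR, Matrix.inv_def, hdm, Ring.inverse_eq_inv', Matrix.mul_smul]
  have hNs : (1 + T) * (1 - T).adjugate
      = !![1, -(Δ*(u₃/a₁)), Δ*(u₂/a₁); Δ*(u₃/a₂), 1, -(Δ*(u₁/a₂)); -(Δ*(u₂/a₃)), Δ*(u₁/a₃), 1]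
        * adjugate !![1, Δ*(u₃/a₁), -(Δ*(u₂/a₁)); -(Δ*(u₃/a₂)), 1, Δ*(u₁/a₂); Δ*(u₂/a₃), -(Δ*(u₁/a₃)), 1] := by
    rw [hAp, hA]
  have htr : R.trace = (3 - n) / (1 + n) := by
    rw [hRs, Matrix.trace_smul, hNs, Matrix.adjugate_fin_three_of, Matrix.mul_fin_three,
      Matrix.trace_fin_three_of, hn, smul_eq_mul]
    rw [ha3]; field_simp; ring
  have hdet : R.det = 1 := by
    rw [hR, Matrix.det_mul, Matrix.det_nonsing_inv, hdm, hdp, Ring.inverse_eq_inv']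
    field_simp
  have hc2 : R 0 0 * R 1 1 - R 0 1 * R 1 0 + (R 0 0 * R 2 2 - R 0 2 * R 2 0)
      + (R 1 1 * R 2 2 - R 1 2 * R 2 1) = (3 - n) / (1 + n) := by
    rw [hRs, hNs, Matrix.adjugate_fin_three_of, Matrix.mul_fin_three]
    simp only [Matrix.smul_apply, Matrix.cons_val', Matrix.cons_val_zero, Matrix.cons_val_one,
      Matrix.head_cons, Matrix.empty_val', Matrix.cons_val_fin_one, Matrix.head_fin_const,
      Matrix.cons_val_two, Matrix.tail_cons, Matrix.of_apply, smul_eq_mul]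
    rw [hn, ha3]; field_simp; ring
  rw [charpoly3, htr, hdet, hc2]
  have hc : (3 - n) / (1 + n) = 2 * ((1 - n) / (1 + n)) + 1 := by field_simp; ring
  rw [hc]
  simp only [_root_.map_add, _root_.map_mul, _root_.map_one, map_ofNat]
  ring
end

section
/- Let a₁,a₂,a₃ > 0, Ω = diag(a₁,a₂,a₃), and let x, y ∈ ℝ³ be nonzero vectors with x ≠ −y and B(x,x) = B(y,y). Then the matrix R = H_y · H_{x+y}, the product of the two elliptical Householder matrices, satisfies RᵀΩR = Ω, det R = 1, and R·x = y; i.e., R is an elliptical rotation matrix on the ellipsoid a₁x² + a₂y² + a₃z² = B(x,x) rotating x to y. -/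
open Matrix

set_option linter.unusedSectionVars false

section gen
variable {n : Type*} [Fintype n] [DecidableEq n]

private lemma vmv_mul (v w : n → ℝ) (M : Matrix n n ℝ) :
    vecMulVec v w * M = vecMulVec v (w ᵥ* M) := by
  ext i j
  simp [Matrix.mul_apply, vecMulVec_apply, vecMul, dotProduct, Finset.mul_sum, mul_assoc]

private lemma vmv_mul_vmv (a b c d : n → ℝ) :
    vecMulVec a b * vecMulVec c d = (b ⬝ᵥ c) • vecMulVec a d := by
  ext i j
  simp only [Matrix.mul_apply, vecMulVec_apply, dotProduct, Matrix.smul_apply, smul_eq_mul,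
    Finset.sum_mul]
  exact Finset.sum_congr rfl fun k _ => by ring

private lemma vmv_transpose (v w : n → ℝ) :
    (vecMulVec v w)ᵀ = vecMulVec w v := by
  ext i j; simp [vecMulVec_apply, mul_comm]

private lemma householder_iso (Ω : Matrix n n ℝ) (hsym : Ωᵀ = Ω) (v : n → ℝ)
    (hs : v ⬝ᵥ Ω *ᵥ v ≠ 0) :
    ((1 : Matrix n n ℝ) - (2 / (v ⬝ᵥ Ω *ᵥ v)) • (vecMulVec v v * Ω))ᵀ * Ω *
      ((1 : Matrix n n ℝ) - (2 / (v ⬝ᵥ Ω *ᵥ v)) • (vecMulVec v v * Ω)) = Ω := by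
  set s := v ⬝ᵥ Ω *ᵥ v with hsdef
  set c := 2 / s with hc
  set V := vecMulVec v v with hV
  have hVt : Vᵀ = V := vmv_transpose v v
  have hHT : ((1 : Matrix n n ℝ) - c • (V * Ω))ᵀ = 1 - c • (Ω * V) := by
    rw [transpose_sub, transpose_smul, transpose_mul, hVt, hsym, transpose_one]
  have key : V * Ω * V = s • V := by
    rw [hV, vmv_mul, vmv_mul_vmv, ← dotProduct_mulVec]
  have key2 : V * (Ω * (V * Ω)) = s • (V * Ω) := by
    calc V * (Ω * (V * Ω)) = (V * Ω * V) * Ω := by simp only [Matrix.mul_assoc]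
      _ = (s • V) * Ω := by rw [key]
      _ = s • (V * Ω) := by rw [Matrix.smul_mul]
  have hcs : c * c * s = c + c := by
    rw [hc]; field_simp; ring
  rw [hHT]
  have expand : (1 - c • (Ω * V)) * Ω * (1 - c • (V * Ω))
      = Ω - c • (Ω * (V * Ω)) - c • (Ω * (V * Ω)) + (c * c) • (Ω * (V * (Ω * (V * Ω)))) := by
    simp only [Matrix.sub_mul, Matrix.mul_sub, Matrix.smul_mul, Matrix.mul_smul,
      Matrix.one_mul, Matrix.mul_one, smul_smul, smul_sub, smul_add, Matrix.mul_assoc]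
    abel
  rw [expand, key2, Matrix.mul_smul, smul_smul, hcs]
  module

private lemma householder_mulVec (Ω : Matrix n n ℝ) (v u : n → ℝ) :
    ((1 : Matrix n n ℝ) - (2 / (v ⬝ᵥ Ω *ᵥ v)) • (vecMulVec v v * Ω)) *ᵥ u
      = u - (2 / (v ⬝ᵥ Ω *ᵥ v) * (v ⬝ᵥ Ω *ᵥ u)) • v := by
  rw [Matrix.sub_mulVec, Matrix.one_mulVec, Matrix.smul_mulVec,
    ← Matrix.mulVec_mulVec]
  congr 1
  have : vecMulVec v v *ᵥ (Ω *ᵥ u) = (v ⬝ᵥ Ω *ᵥ u) • v := by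
    ext i
    simp only [mulVec, vecMulVec_apply, dotProduct, Pi.smul_apply, smul_eq_mul,
      Finset.sum_mul]
    exact Finset.sum_congr rfl fun k _ => by ring
  rw [this, smul_smul]

private lemma householder_det (Ω : Matrix n n ℝ) (v : n → ℝ)
    (hs : v ⬝ᵥ Ω *ᵥ v ≠ 0) :
    ((1 : Matrix n n ℝ) - (2 / (v ⬝ᵥ Ω *ᵥ v)) • (vecMulVec v v * Ω)).det = -1 := by
  have h1 : (1 : Matrix n n ℝ) - (2 / (v ⬝ᵥ Ω *ᵥ v)) • (vecMulVec v v * Ω)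
      = 1 + replicateCol Unit v * replicateRow Unit ((-(2 / (v ⬝ᵥ Ω *ᵥ v))) • (v ᵥ* Ω)) := by
    rw [vmv_mul, sub_eq_add_neg]
    congr 1
    rw [← neg_smul]
    ext i j
    simp [vecMulVec_apply, Matrix.mul_apply, mul_comm]
    ring
  rw [h1, det_one_add_replicateCol_mul_replicateRow]
  rw [smul_dotProduct, ← dotProduct_mulVec]
  simp only [smul_eq_mul]
  field_simp
  ring

private lemma dot_symm (Ω : Matrix n n ℝ) (hsym : Ωᵀ = Ω) (u w : n → ℝ) :
    u ⬝ᵥ Ω *ᵥ w = w ⬝ᵥ Ω *ᵥ u := by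
  conv_lhs => rw [dotProduct_mulVec, ← hsym, vecMul_transpose]
  exact dotProduct_comm _ _

end gen

private lemma quad_pos3 (a₁ a₂ a₃ : ℝ) (ha₁ : 0 < a₁) (ha₂ : 0 < a₂) (ha₃ : 0 < a₃)
    (v : Fin 3 → ℝ) (hv : v ≠ 0) :
    0 < v ⬝ᵥ (Matrix.diagonal ![a₁, a₂, a₃]) *ᵥ v := by
  have hval : v ⬝ᵥ (Matrix.diagonal ![a₁, a₂, a₃]) *ᵥ v
      = a₁ * v 0 ^ 2 + a₂ * v 1 ^ 2 + a₃ * v 2 ^ 2 := by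
    simp [dotProduct, mulVec, Matrix.diagonal, Fin.sum_univ_three]
    ring
  rw [hval]
  by_contra h
  push_neg at h
  apply hv
  have h0 : v 0 ^ 2 = 0 := by nlinarith [sq_nonneg (v 0), sq_nonneg (v 1), sq_nonneg (v 2)]
  have h1 : v 1 ^ 2 = 0 := by nlinarith [sq_nonneg (v 0), sq_nonneg (v 1), sq_nonneg (v 2)]
  have h2 : v 2 ^ 2 = 0 := by nlinarith [sq_nonneg (v 0), sq_nonneg (v 1), sq_nonneg (v 2)]
  funext i
  fin_cases i <;>
    simpa using by first
      | exact pow_eq_zero_iff (n := 2) (by norm_num) |>.mp h0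
      | exact pow_eq_zero_iff (n := 2) (by norm_num) |>.mp h1
      | exact pow_eq_zero_iff (n := 2) (by norm_num) |>.mp h2

theorem elliptical_householder_rotation_3d (a₁ a₂ a₃ : ℝ)
    (ha₁ : 0 < a₁) (ha₂ : 0 < a₂) (ha₃ : 0 < a₃)
    (Ω : Matrix (Fin 3) (Fin 3) ℝ) (hΩ : Ω = Matrix.diagonal ![a₁, a₂, a₃])
    (x y : Fin 3 → ℝ) (hx : x ≠ 0) (hy : y ≠ 0) (hxy : x ≠ -y)
    (hnorm : x ⬝ᵥ Ω.mulVec x = y ⬝ᵥ Ω.mulVec y)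
    (Hxy Hy R : Matrix (Fin 3) (Fin 3) ℝ)
    (hHxy : Hxy = 1 - (2 / ((x + y) ⬝ᵥ Ω.mulVec (x + y))) •
        (Matrix.vecMulVec (x + y) (x + y) * Ω))
    (hHy : Hy = 1 - (2 / (y ⬝ᵥ Ω.mulVec y)) • (Matrix.vecMulVec y y * Ω))
    (hR : R = Hy * Hxy) :
    Rᵀ * Ω * R = Ω ∧ R.det = 1 ∧ R.mulVec x = y := by
  have hsym : Ωᵀ = Ω := by rw [hΩ, Matrix.diagonal_transpose]
  subst hHxy hHy hR
  have hxy0 : x + y ≠ 0 := by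
    intro h; apply hxy
    have := congrArg (fun z => z - y) h
    simpa [add_sub_cancel_right, sub_eq_iff_eq_add] using this
  have hsy : y ⬝ᵥ Ω *ᵥ y ≠ 0 := by
    rw [hΩ]; exact ne_of_gt (quad_pos3 a₁ a₂ a₃ ha₁ ha₂ ha₃ y hy)
  have hsxy : (x + y) ⬝ᵥ Ω *ᵥ (x + y) ≠ 0 := by
    rw [hΩ]; exact ne_of_gt (quad_pos3 a₁ a₂ a₃ ha₁ ha₂ ha₃ (x + y) hxy0)
  refine ⟨?_, ?_, ?_⟩
  · have h1 := householder_iso Ω hsym y hsy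
    have h2 := householder_iso Ω hsym (x + y) hsxy
    rw [Matrix.transpose_mul]
    calc _ = (1 - (2 / ((x + y) ⬝ᵥ Ω *ᵥ (x + y))) • (Matrix.vecMulVec (x+y) (x+y) * Ω))ᵀ *
            ((1 - (2 / (y ⬝ᵥ Ω *ᵥ y)) • (Matrix.vecMulVec y y * Ω))ᵀ * Ω *
             (1 - (2 / (y ⬝ᵥ Ω *ᵥ y)) • (Matrix.vecMulVec y y * Ω))) *
            (1 - (2 / ((x + y) ⬝ᵥ Ω *ᵥ (x + y))) • (Matrix.vecMulVec (x+y) (x+y) * Ω)) := by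
          simp only [Matrix.mul_assoc]
      _ = _ := by rw [h1]; exact h2
  · rw [Matrix.det_mul, householder_det Ω y hsy, householder_det Ω (x + y) hsxy]
    norm_num
  · have hmid : (x + y) ⬝ᵥ Ω *ᵥ (x + y) = 2 * ((x + y) ⬝ᵥ Ω *ᵥ x) := by
      have hc := dot_symm Ω hsym x y
      simp only [add_dotProduct, mulVec_add, dotProduct_add] at *
      linarith [hnorm, hc]
    have hdx : (x + y) ⬝ᵥ Ω *ᵥ x ≠ 0 := by
      intro h; apply hsxy; rw [hmid, h, mul_zero]
    have hcoef : ∀ t : ℝ, t ≠ 0 → 2 / (2 * t) * t = 1 := by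
      intro t ht; field_simp
    have h2 : ∀ t : ℝ, t ≠ 0 → 2 / t * -t = -2 := by
      intro t ht; field_simp
    have hneg : y ⬝ᵥ Ω *ᵥ (-y) = -(y ⬝ᵥ Ω *ᵥ y) := by
      rw [mulVec_neg, dotProduct_neg]
    have hinner : (1 - (2 / ((x + y) ⬝ᵥ Ω *ᵥ (x + y))) •
        (Matrix.vecMulVec (x + y) (x + y) * Ω)) *ᵥ x = -y := by
      rw [householder_mulVec, hmid, hcoef _ hdx, one_smul]
      abel
    have houter : (1 - (2 / (y ⬝ᵥ Ω *ᵥ y)) • (Matrix.vecMulVec y y * Ω)) *ᵥ (-y) = y := by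
      rw [householder_mulVec, hneg, h2 _ hsy]
      ext i
      simp
      ring
    rw [← Matrix.mulVec_mulVec, hinner, houter]
end
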